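/- Let (Ω_d, ρ_d, μ_d) be a normal Lévy family (α_d(ε) ≤ C·e^{−cε²d}) with samples X_d of size n_d = d^{o(1)} drawn i.i.d. from μ_d, and suppose the median M_d of the distance between two independent points satisfies c₁ < M_d < c₂ for all d. Let m_d be the median over ω of the distance from ω to its nearest neighbor in X_d. Then there exist c₃ > 0 and D such that m_d > c₃ for all d ≥ D. -/
import Mathlib


open MeasureTheory Metric Set

/-- The concentration function of a metric probability space:
`α(0) = 1/2`, and for `ε > 0`,
`α(ε) = sup {1 - μ(A_ε) : A Borel, μ(A) ≥ 1/2}` where `A_ε` is the open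
`ε`-neighborhood (thickening) of `A`. -/
noncomputable def concFn {Ω : Type*} [MetricSpace Ω] [MeasurableSpace Ω] [BorelSpace Ω] (μ : Measure Ω) (ε : ℝ) : ℝ :=
  if ε = 0 then 1/2
  else sSup {t : ℝ | ∃ A : Set Ω, MeasurableSet A ∧ (1/2 : ℝ) ≤ (μ A).toReal ∧
    t = 1 - (μ (thickening ε A)).toReal}

section Helpers

variable {Ω' : Type*} [MetricSpace Ω'] [MeasurableSpace Ω'] [BorelSpace Ω']

lemma toReal_compl_eq (μ : Measure Ω') [IsProbabilityMeasure μ] {A : Set Ω'}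
    (hA : MeasurableSet A) : (μ Aᶜ).toReal = 1 - (μ A).toReal := by
  rw [prob_compl_eq_one_sub hA, ENNReal.toReal_sub_of_le prob_le_one ENNReal.one_ne_top,
    ENNReal.toReal_one]

lemma lemA (μ : Measure Ω') [IsProbabilityMeasure μ] {ε : ℝ} (hε : 0 < ε) {A : Set Ω'}
    (hA : MeasurableSet A) (h2 : (1/2 : ℝ) ≤ (μ A).toReal) :
    1 - concFn μ ε ≤ (μ (thickening ε A)).toReal := by
  have hmem : 1 - (μ (thickening ε A)).toReal ∈
      {t : ℝ | ∃ B : Set Ω', MeasurableSet B ∧ (1/2 : ℝ) ≤ (μ B).toReal ∧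
        t = 1 - (μ (thickening ε B)).toReal} := ⟨A, hA, h2, rfl⟩
  have hbdd : BddAbove {t : ℝ | ∃ B : Set Ω', MeasurableSet B ∧ (1/2 : ℝ) ≤ (μ B).toReal ∧
      t = 1 - (μ (thickening ε B)).toReal} := by
    refine ⟨1, fun t ht => ?_⟩
    obtain ⟨B, -, -, rfl⟩ := ht
    have := ENNReal.toReal_nonneg (a := μ (thickening ε B))
    linarith
  have hle := le_csSup hbdd hmem
  rw [concFn, if_neg hε.ne']
  linarith

lemma lemB (μ : Measure Ω') [IsProbabilityMeasure μ] {ε α : ℝ} (hε : 0 < ε)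
    (hα : concFn μ ε ≤ α) {A : Set Ω'} (hA : MeasurableSet A)
    (h : α < (μ A).toReal) : 1/2 < (μ (thickening ε A)).toReal := by
  by_contra h2
  push_neg at h2
  have hTM : MeasurableSet (thickening ε A) := isOpen_thickening.measurableSet
  have hBμ : (1/2 : ℝ) ≤ (μ (thickening ε A)ᶜ).toReal := by
    rw [toReal_compl_eq μ hTM]; linarith
  have h3 := lemA μ hε hTM.compl hBμ
  have hsub : A ⊆ (thickening ε ((thickening ε A)ᶜ))ᶜ := by
    intro a ha hmem
    rw [mem_thickening_iff] at hmem
    obtain ⟨b, hb, hd⟩ := hmem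
    exact hb (mem_thickening_iff.mpr ⟨a, ha, by rwa [dist_comm]⟩)
  have h4 : (μ A).toReal ≤ (μ ((thickening ε ((thickening ε A)ᶜ))ᶜ)).toReal :=
    ENNReal.toReal_mono (measure_ne_top _ _) (measure_mono hsub)
  rw [toReal_compl_eq μ isOpen_thickening.measurableSet] at h4
  linarith

end Helpers

theorem stmt9 (Ω : ℕ → Type*) [∀ d, MetricSpace (Ω d)] [∀ d, MeasurableSpace (Ω d)] [∀ d, BorelSpace (Ω d)]
    (μ : ∀ d, Measure (Ω d)) [∀ d, IsProbabilityMeasure (μ d)]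
    -- normal Lévy family
    (C c : ℝ) (hC : 0 < C) (hc : 0 < c)
    (hlevy : ∀ d : ℕ, ∀ ε > (0:ℝ), concFn (μ d) ε ≤ C * Real.exp (-c * ε^2 * d))
    -- samples of size n_d = d^{o(1)}
    (X : ∀ d, Finset (Ω d)) (hX : ∀ d, (X d).Nonempty)
    (n : ℕ → ℕ) (hcard : ∀ d, (X d).card = n d)
    (hsub : ∀ ε > (0:ℝ), ∀ᶠ d in Filter.atTop, (n d : ℝ) ≤ (d : ℝ) ^ ε)
    -- M_d a median of the distance between two independent points, c₁ < M_d < c₂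
    (M : ℕ → ℝ)
    (hM : ∀ d, (1/2 : ℝ) ≤ (((μ d).prod (μ d)) {q | dist q.1 q.2 ≤ M d}).toReal ∧
               (1/2 : ℝ) ≤ (((μ d).prod (μ d)) {q | M d ≤ dist q.1 q.2}).toReal)
    (c₁ c₂ : ℝ) (hc₁ : 0 < c₁) (hMbound : ∀ d, c₁ < M d ∧ M d < c₂)
    -- m_d a median of the nearest-neighbour distance ω ↦ dist(ω, X_d)
    (m : ℕ → ℝ)
    (hm : ∀ d, (1/2 : ℝ) ≤ ((μ d) {ω | infDist ω (X d : Set (Ω d)) ≤ m d}).toReal ∧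
               (1/2 : ℝ) ≤ ((μ d) {ω | m d ≤ infDist ω (X d : Set (Ω d))}).toReal) :
    ∃ c₃ > (0:ℝ), ∃ D : ℕ, ∀ d ≥ D, c₃ < m d := by
  classical
  set ε : ℝ := c₁ / 8 with hε_def
  have hε : 0 < ε := by rw [hε_def]; linarith
  set k : ℝ := c * ε ^ 2 with hk_def
  have hk : 0 < k := by positivity
  -- k * d → atTop
  have h2 : Filter.Tendsto (fun d : ℕ => k * (d : ℝ)) Filter.atTop Filter.atTop :=
    Filter.Tendsto.const_mul_atTop hk tendsto_natCast_atTop_atTop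
  -- C * exp (-(k d)) → 0
  have T1 : Filter.Tendsto (fun d : ℕ => C * Real.exp (-(k * (d : ℝ)))) Filter.atTop (nhds 0) := by
    have h3 := (Real.tendsto_exp_atBot.comp (Filter.tendsto_neg_atTop_atBot.comp h2)).const_mul C
    rw [mul_zero] at h3
    exact h3.congr fun d => rfl
  -- d * (C * exp (-(k d))) → 0
  have T2 : Filter.Tendsto (fun d : ℕ => (d : ℝ) * (C * Real.exp (-(k * (d : ℝ)))))
      Filter.atTop (nhds 0) := by
    have h3 := ((Real.tendsto_pow_mul_exp_neg_atTop_nhds_zero 1).comp h2).const_mul (C / k)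
    rw [mul_zero] at h3
    refine h3.congr fun d => ?_
    simp only [Function.comp, pow_one]
    field_simp
  have E1 := hsub 1 one_pos
  have E2 := T2.eventually_lt_const (show (0:ℝ) < 1/2 by norm_num)
  have E3 := T1.eventually_lt_const (show (0:ℝ) < 1/4 by norm_num)
  obtain ⟨D, hD⟩ := Filter.eventually_atTop.mp ((E1.and E2).and E3)
  refine ⟨c₁/16, by linarith, D, fun d hd => ?_⟩
  obtain ⟨⟨hn, hE2⟩, hE3⟩ := hD d hd
  rw [Real.rpow_one] at hn
  set α : ℝ := C * Real.exp (-(k * (d : ℝ))) with hα_def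
  have hα_pos : 0 < α := by positivity
  have hE2' : (d : ℝ) * α < 1/2 := hE2
  have hE3' : α < 1/4 := hE3
  have hconc : concFn (μ d) ε ≤ α := by
    have h1 := hlevy d ε hε
    have h2' : -c * ε ^ 2 * (d : ℝ) = -(k * (d : ℝ)) := by rw [hk_def]; ring
    rwa [h2', ← hα_def] at h1
  -- every ε-ball has measure at most α
  have hball : ∀ x : Ω d, ((μ d) (ball x ε)).toReal ≤ α := by
    intro x
    by_contra hgt
    push_neg at hgt
    have h1 : 1/2 < ((μ d) (thickening ε (ball x ε))).toReal :=
      lemB (μ d) hε hconc measurableSet_ball hgt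
    have hsub1 : thickening ε (ball x ε) ⊆ ball x (2*ε) := by
      intro y hy
      rw [mem_thickening_iff] at hy
      obtain ⟨z, hz, hd'⟩ := hy
      rw [mem_ball] at hz ⊢
      calc dist y x ≤ dist y z + dist z x := dist_triangle _ _ _
        _ < ε + ε := add_lt_add hd' hz
        _ = 2*ε := by ring
    have h2' : (1/2:ℝ) ≤ ((μ d) (ball x (2*ε))).toReal :=
      le_trans h1.le (ENNReal.toReal_mono (measure_ne_top _ _) (measure_mono hsub1))
    have h3 : 1 - concFn (μ d) ε ≤ ((μ d) (thickening ε (ball x (2*ε)))).toReal :=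
      lemA (μ d) hε measurableSet_ball h2'
    have hsub2 : thickening ε (ball x (2*ε)) ⊆ ball x (3*ε) := by
      intro y hy
      rw [mem_thickening_iff] at hy
      obtain ⟨z, hz, hd'⟩ := hy
      rw [mem_ball] at hz ⊢
      calc dist y x ≤ dist y z + dist z x := dist_triangle _ _ _
        _ < ε + 2*ε := add_lt_add hd' hz
        _ = 3*ε := by ring
    have h4 : (3/4:ℝ) ≤ ((μ d) (ball x (3*ε))).toReal := by
      have hmono := ENNReal.toReal_mono (measure_ne_top (μ d) (ball x (3*ε)))
        (measure_mono hsub2)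
      linarith
    have hprod : ((μ d).prod (μ d)) (ball x (3*ε) ×ˢ ball x (3*ε))
        = (μ d) (ball x (3*ε)) * (μ d) (ball x (3*ε)) := Measure.prod_prod _ _
    have h5 : (9/16:ℝ) ≤ (((μ d).prod (μ d)) (ball x (3*ε) ×ˢ ball x (3*ε))).toReal := by
      rw [hprod, ENNReal.toReal_mul]
      nlinarith [h4]
    have h6ε : 6*ε < M d := by
      have := (hMbound d).1
      rw [hε_def]
      linarith
    have hsub3 : ball x (3*ε) ×ˢ ball x (3*ε) ⊆ {q : Ω d × Ω d | M d ≤ dist q.1 q.2}ᶜ := by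
      rintro ⟨p, q⟩ ⟨hp, hq⟩
      simp only [mem_compl_iff, mem_setOf_eq, not_le]
      calc dist p q ≤ dist p x + dist x q := dist_triangle _ _ _
        _ < 3*ε + 3*ε := add_lt_add (mem_ball.mp hp) (by rw [dist_comm]; exact mem_ball.mp hq)
        _ = 6*ε := by ring
        _ < M d := h6ε
    have hPmeas : MeasurableSet (ball x (3*ε) ×ˢ ball x (3*ε)) :=
      measurableSet_ball.prod measurableSet_ball
    have hdisj : Disjoint (ball x (3*ε) ×ˢ ball x (3*ε))
        {q : Ω d × Ω d | M d ≤ dist q.1 q.2} :=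
      Set.disjoint_left.mpr fun q hq hq' => hsub3 hq hq'
    have hadd : ((μ d).prod (μ d)) (ball x (3*ε) ×ˢ ball x (3*ε))
        + ((μ d).prod (μ d)) {q : Ω d × Ω d | M d ≤ dist q.1 q.2} ≤ 1 := by
      rw [← measure_union' hdisj hPmeas]
      exact prob_le_one
    have htr : (((μ d).prod (μ d)) (ball x (3*ε) ×ˢ ball x (3*ε))).toReal
        + (((μ d).prod (μ d)) {q : Ω d × Ω d | M d ≤ dist q.1 q.2}).toReal ≤ 1 := by
      rw [← ENNReal.toReal_add (measure_ne_top _ _) (measure_ne_top _ _)]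
      simpa using ENNReal.toReal_mono ENNReal.one_ne_top hadd
    linarith [(hM d).2]
  -- union bound and conclusion
  by_contra hmd
  push_neg at hmd
  have hsubset : {ω : Ω d | infDist ω (X d : Set (Ω d)) ≤ m d} ⊆ ⋃ x ∈ X d, ball x ε := by
    intro ω hω
    have h1 : infDist ω (X d : Set (Ω d)) < ε := by
      have : infDist ω (X d : Set (Ω d)) ≤ c₁/16 := le_trans hω hmd
      rw [hε_def]
      linarith
    obtain ⟨x, hx, hdx⟩ := (infDist_lt_iff (Finset.coe_nonempty.mpr (hX d))).mp h1
    exact mem_biUnion hx (mem_ball.mpr hdx)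
  have h1 : (μ d) {ω | infDist ω (X d : Set (Ω d)) ≤ m d} ≤ ∑ x ∈ X d, (μ d) (ball x ε) :=
    le_trans (measure_mono hsubset) (measure_biUnion_finset_le _ _)
  have hsum : (∑ x ∈ X d, (μ d) (ball x ε)).toReal = ∑ x ∈ X d, ((μ d) (ball x ε)).toReal :=
    ENNReal.toReal_sum fun x _ => measure_ne_top _ _
  have hsum_ne : (∑ x ∈ X d, (μ d) (ball x ε)) ≠ ⊤ := by
    refine (ENNReal.sum_lt_top.mpr fun x _ => measure_lt_top _ _).ne
  have h2' : ((μ d) {ω | infDist ω (X d : Set (Ω d)) ≤ m d}).toReal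
      ≤ ∑ x ∈ X d, ((μ d) (ball x ε)).toReal := by
    rw [← hsum]
    exact ENNReal.toReal_mono hsum_ne h1
  have h3 : ∑ x ∈ X d, ((μ d) (ball x ε)).toReal ≤ (n d : ℝ) * α := by
    calc ∑ x ∈ X d, ((μ d) (ball x ε)).toReal ≤ ∑ _x ∈ X d, α :=
          Finset.sum_le_sum fun x _ => hball x
      _ = ((X d).card : ℝ) * α := by rw [Finset.sum_const, nsmul_eq_mul]
      _ = (n d : ℝ) * α := by rw [hcard d]
  have h4 : (n d : ℝ) * α ≤ (d : ℝ) * α := mul_le_mul_of_nonneg_right hn hα_pos.le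
  linarith [(hm d).1]
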